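/- For all real numbers a and b, F(a) - F(b) ≤ f(a,b)(a - b), where F(x) = (1/4)(x² - 1)² and f(a,b) = a³ - b. -/
import Mathlib

theorem convex_splitting_inequality (a b : ℝ) :
    (a ^ 2 - 1) ^ 2 / 4 - (b ^ 2 - 1) ^ 2 / 4 ≤ (a ^ 3 - b) * (a - b) := by
  nlinarith [sq_nonneg (a - b), sq_nonneg (a + b), sq_nonneg (a^2 - b^2), sq_nonneg (a^2 + a*b + b^2 - 2), sq_nonneg (a*(a-b))]
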